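/- (Correctness of the single-matrix Brouwer–Zimmermann stopping criterion) Let C ⊆ F_q^n be a linear code of dimension k with a generator matrix of the form G = (I_k | A), and fix 1 ≤ r ≤ k and r ≤ w < k. Define d' = min{|supp(enc_G(E))| : E ⊆ F_q^k a subspace with dim E = r and |supp(E)| ≤ w}. If w + 1 ≥ d', then d_r(C) = d'. -/

import Mathlib

open Classical

/-- The support of a linear subspace `D` of `ι → F`:
the set of coordinates at which some element of `D` is nonzero. -/
def Submodule.suppSet {F ι : Type*} [Field F] (D : Submodule F (ι → F)) : Set ι :=
  {i | ∃ c ∈ D, c i ≠ 0}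

/-- The `r`-th generalized Hamming weight of a linear code `C ⊆ F^ι`:
the minimum support size of an `r`-dimensional subcode of `C`. -/
noncomputable def ghw {F ι : Type*} [Field F] (C : Submodule F (ι → F)) (r : ℕ) : ℕ :=
  sInf {w | ∃ D : Submodule F (ι → F),
    D ≤ C ∧ Module.finrank F D = r ∧ D.suppSet.ncard = w}

/-- The `r`-th relative generalized Hamming weight of the nested pair `C₂ ⊆ C₁`:
the minimum support size of an `r`-dimensional subcode `D` of `C₁` with `D ∩ C₂ = 0`. -/
noncomputable def rghw {F ι : Type*} [Field F] (C₁ C₂ : Submodule F (ι → F)) (r : ℕ) : ℕ :=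
  sInf {w | ∃ D : Submodule F (ι → F),
    D ≤ C₁ ∧ D ⊓ C₂ = ⊥ ∧ Module.finrank F D = r ∧ D.suppSet.ncard = w}

/-- The dual code of `C ⊆ F^n` with respect to the standard Euclidean inner product. -/
def dualCode {F : Type*} [Field F] {n : ℕ} (C : Submodule F (Fin n → F)) :
    Submodule F (Fin n → F) where
  carrier := {x | ∀ c ∈ C, ∑ i, x i * c i = 0}
  add_mem' := by
    intro a b ha hb c hc
    simp only [Set.mem_setOf_eq] at *
    simp [Pi.add_apply, add_mul, Finset.sum_add_distrib, ha c hc, hb c hc]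
  zero_mem' := by simp
  smul_mem' := by
    intro t a ha c hc
    simp only [Set.mem_setOf_eq] at *
    simp [Pi.smul_apply, smul_eq_mul, mul_assoc, ← Finset.mul_sum, ha c hc]

/-!
Encoding by `G = (I_k | A)` is injective and copies each message onto the first `k`
coordinates, so every `r`-dimensional subcode of `C` is `enc_G E` for an `r`-dimensional `E`,
and `|supp E| ≤ |supp (enc_G E)|`. The subspace realising `d'` gives `d_r(C) ≤ d'`. Conversely,
the `E` underlying an optimal subcode either has `|supp E| ≤ w`, and then `d'` bounds the
subcode's support from below by definition, or has `|supp E| ≥ w + 1 ≥ d'`.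
-/

open Submodule Module Function Matrix

namespace Submodule

variable {F ι : Type*} [Field F]

theorem suppSet_subset_iff_le_pi {D : Submodule F (ι → F)} {s : Set ι} :
    D.suppSet ⊆ s ↔ D ≤ pi sᶜ fun _ => ⊥ := by
  constructor
  · intro hD x hx i hi
    by_contra hxi
    exact hi (hD ⟨x, hx, hxi⟩)
  · rintro hD i ⟨x, hx, hxi⟩
    by_contra hi
    exact hxi ((mem_bot F).1 (mem_pi.1 (hD hx) i hi))

theorem exists_finrank_eq_card_suppSet_subset (s : Finset ι) :
    ∃ E : Submodule F (ι → F), finrank F E = s.card ∧ E.suppSet ⊆ s := by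
  let v : s → ι → F := fun i => Pi.single (i : ι) 1
  have hv : LinearIndependent F v :=
    (Pi.linearIndependent_single_one ι F).comp _ Subtype.val_injective
  refine ⟨span F (Set.range v), by simp [finrank_span_eq_card hv], ?_⟩
  rw [suppSet_subset_iff_le_pi, span_le]
  rintro _ ⟨i, rfl⟩
  refine mem_pi.2 fun j hj => (mem_bot F).2 (Pi.single_eq_of_ne ?_ _)
  rintro rfl
  exact hj i.2

theorem exists_finrank_eq_ncard_suppSet_le [Fintype ι] {r : ℕ} (hr : r ≤ Fintype.card ι) :
    ∃ E : Submodule F (ι → F), finrank F E = r ∧ E.suppSet.ncard ≤ r := by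
  obtain ⟨s, -, rfl⟩ := Finset.exists_subset_card_eq (s := Finset.univ) hr
  obtain ⟨E, hEr, hEs⟩ := exists_finrank_eq_card_suppSet_subset (F := F) s
  exact ⟨E, hEr, (Set.ncard_le_ncard hEs s.finite_toSet).trans_eq (Set.ncard_coe_finset s)⟩

end Submodule

section SystematicEncoding

variable {F ι κ : Type*} [Field F] (f : (κ → F) →ₗ[F] (ι → F))

def encodedSupportSizes (r w : ℕ) : Set ℕ :=
  {s | ∃ E : Submodule F (κ → F),
    finrank F E = r ∧ E.suppSet.ncard ≤ w ∧ (E.map f).suppSet.ncard = s}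

variable {f}

theorem finrank_map_of_injective (hf : Injective f) (E : Submodule F (κ → F)) :
    finrank F (E.map f) = finrank F E :=
  (equivMapOfInjective f hf E).finrank_eq.symm

theorem ghw_range_le_ncard_suppSet_map (hf : Injective f) (E : Submodule F (κ → F)) :
    ghw (LinearMap.range f) (finrank F E) ≤ (E.map f).suppSet.ncard :=
  Nat.sInf_le ⟨E.map f, LinearMap.map_le_range, finrank_map_of_injective hf E, rfl⟩

theorem exists_ncard_suppSet_eq_ghw {C : Submodule F (ι → F)} {r : ℕ}
    (h : ∃ D ≤ C, finrank F D = r) :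
    ∃ D ≤ C, finrank F D = r ∧ D.suppSet.ncard = ghw C r := by
  obtain ⟨D, hDC, hDr⟩ := h
  exact Nat.sInf_mem (s := {w | ∃ D ≤ C, finrank F D = r ∧ D.suppSet.ncard = w})
    ⟨_, D, hDC, hDr, rfl⟩

variable [Finite ι] {e : κ → ι}

theorem ncard_suppSet_le_ncard_suppSet_map (he : Injective e) (hfe : LeftInverse (· ∘ e) f)
    (E : Submodule F (κ → F)) : E.suppSet.ncard ≤ (E.map f).suppSet.ncard := by
  refine Set.ncard_le_ncard_of_injOn e ?_ he.injOn (Set.toFinite _)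
  rintro i ⟨x, hx, hxi⟩
  refine ⟨f x, mem_map_of_mem hx, ?_⟩
  rwa [← congrFun (hfe x) i] at hxi

theorem ghw_range_eq_sInf_encodedSupportSizes (he : Injective e) (hfe : LeftInverse (· ∘ e) f)
    {r w : ℕ} (hne : ∃ E : Submodule F (κ → F), finrank F E = r ∧ E.suppSet.ncard ≤ w)
    (hstop : sInf (encodedSupportSizes f r w) ≤ w + 1) :
    ghw (LinearMap.range f) r = sInf (encodedSupportSizes f r w) := by
  obtain ⟨E₀, hE₀r, hE₀w⟩ := hne
  obtain ⟨E, hEr, hEw, hEs⟩ : sInf (encodedSupportSizes f r w) ∈ encodedSupportSizes f r w :=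
    Nat.sInf_mem ⟨_, E₀, hE₀r, hE₀w, rfl⟩
  have hupper : ghw (LinearMap.range f) r ≤ sInf (encodedSupportSizes f r w) := by
    rw [← hEs, ← hEr]
    exact ghw_range_le_ncard_suppSet_map hfe.injective E
  obtain ⟨D, hDf, hDr, hDs⟩ := exists_ncard_suppSet_eq_ghw
    ⟨E.map f, LinearMap.map_le_range, hEr ▸ finrank_map_of_injective hfe.injective E⟩
  have hmap : (D.comap f).map f = D := map_comap_eq_of_le hDf
  have hlower : sInf (encodedSupportSizes f r w) ≤ ghw (LinearMap.range f) r := by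
    by_cases hw : (D.comap f).suppSet.ncard ≤ w
    · refine Nat.sInf_le ⟨D.comap f, ?_, hw, by rw [hmap, hDs]⟩
      rw [← hDr, ← finrank_map_of_injective hfe.injective, hmap]
    · have hsupp := ncard_suppSet_le_ncard_suppSet_map he hfe (D.comap f)
      rw [hmap, hDs] at hsupp
      omega
  exact le_antisymm hupper hlower

end SystematicEncoding

theorem statement_11 {F : Type*} [Field F] {k m r w d' : ℕ}
    (A : Matrix (Fin k) (Fin m) F)
    (G : Matrix (Fin k) (Fin k ⊕ Fin m) F) (hG : G = Matrix.fromCols 1 A)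
    (C : Submodule F (Fin k ⊕ Fin m → F))
    (hGspan : Submodule.span F (Set.range fun i => G i) = C)
    (hrk : r ≤ k) (hrw : r ≤ w)
    (hd' : d' = sInf {s | ∃ E : Submodule F (Fin k → F),
      Module.finrank F E = r ∧ E.suppSet.ncard ≤ w ∧
      (Submodule.map G.vecMulLinear E).suppSet.ncard = s})
    (hstop : w + 1 ≥ d') :
    ghw C r = d' := by
  subst hG hd' hGspan
  have hsystematic : LeftInverse (· ∘ Sum.inl) (fromCols 1 A).vecMulLinear := fun x => by
    ext i
    simp [vecMul_fromCols]
  obtain ⟨E, hEr, hEs⟩ :=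
    exists_finrank_eq_ncard_suppSet_le (F := F) (Fintype.card_fin k ▸ hrk)
  rw [← row_def, ← range_vecMulLinear]
  exact ghw_range_eq_sInf_encodedSupportSizes Sum.inl_injective hsystematic
    ⟨E, hEr, hEs.trans hrw⟩ hstop
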